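/- Let I ⊆ ℝ be an open interval, ξ : ℝ → ℝ, and W, Z : ℝ → ℂ be functions such that for every t ∈ I: Im(W t) > 0, Im(Z t) > 0, W t ≠ Z t, W has derivative 2/(W t − ξ t) at t, and Z has derivative 2/(Z t − ξ t) at t. Define G(t) := −(1/2π)·log|(W t − Z t)/(W t − conj(Z t))|, P_W(t) := −(1/π)·Im(1/(W t − ξ t)), and P_Z(t) := −(1/π)·Im(1/(Z t − ξ t)). Then for every t ∈ I, the function G has derivative −2π·P_W(t)·P_Z(t) at t. -/

import Mathlib

/-!
Write `G = -(1/2π) log |u|` with `u = (W - Z)/(W - conj Z)`, so that `G' = -(1/2π) Re (u'/u)`.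
Because `ξ` is real, `conj Z` solves the same Loewner equation as `Z`, and for any two solutions
`f, g` one has `(f - g)' = -2 (f - ξ)⁻¹ (g - ξ)⁻¹ (f - g)`. Hence, with `a = (W - ξ)⁻¹` and
`b = (Z - ξ)⁻¹`, `u'/u = 2 a (conj b - b)`, whose real part is `4 Im a Im b = 4π² P_W P_Z`.
-/

/-- Green function of the evolving domain in the half-plane chart:
`G(t) = -(1/2π)·log|(W t - Z t)/(W t - conj (Z t))|`. -/
noncomputable def GreenT (W Z : ℝ → ℂ) (t : ℝ) : ℝ :=
  -(1 / (2 * Real.pi)) *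
    Real.log ‖(W t - Z t) / (W t - (starRingEnd ℂ) (Z t))‖

/-- Poisson kernel at the tip in the half-plane chart:
`P_W(t) = -(1/π)·Im(1/(W t - ξ t))`. -/
noncomputable def PoisT (ξ : ℝ → ℝ) (W : ℝ → ℂ) (t : ℝ) : ℝ :=
  -(1 / Real.pi) * ((W t - (ξ t : ℂ))⁻¹).im

open Complex ComplexConjugate

theorem HasDerivAt.log_norm {u : ℝ → ℂ} {u' : ℂ} {t : ℝ} (hu : HasDerivAt u u' t)
    (h0 : u t ≠ 0) : HasDerivAt (fun s => Real.log ‖u s‖) (u' / u t).re t := by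
  have hsq := (hu.norm_sq.log (by positivity)).div_const 2
  simp only [Real.log_pow, Nat.cast_ofNat, mul_div_cancel_left₀ _ (two_ne_zero' ℝ),
    Complex.inner] at hsq
  refine hsq.congr_deriv ?_
  rw [div_re, ← Complex.normSq_eq_norm_sq]
  simp only [mul_re, conj_re, conj_im]
  ring

section LogarithmicDerivative

variable {𝕜 𝕜' : Type*} [NontriviallyNormedField 𝕜] [NontriviallyNormedField 𝕜']
  [NormedAlgebra 𝕜 𝕜'] {f g : 𝕜 → 𝕜'} {α β c : 𝕜'} {t : 𝕜}

theorem HasDerivAt.div_of_eq_mul (hf : HasDerivAt f (α * f t) t)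
    (hg : HasDerivAt g (β * g t) t) (hg0 : g t ≠ 0) :
    HasDerivAt (fun s => f s / g s) ((α - β) * (f t / g t)) t :=
  (hf.div hg hg0).congr_deriv (by field_simp)

theorem hasDerivAt_sub_of_loewner (hf : HasDerivAt f (2 / (f t - c)) t)
    (hg : HasDerivAt g (2 / (g t - c)) t) (hfc : f t - c ≠ 0) (hgc : g t - c ≠ 0) :
    HasDerivAt (fun s => f s - g s) (-2 * (f t - c)⁻¹ * (g t - c)⁻¹ * (f t - g t)) t :=
  (hf.sub hg).congr_deriv (by field_simp; ring)

end LogarithmicDerivative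

theorem HasDerivAt.conj_loewner {Z : ℝ → ℂ} {x t : ℝ} (hZ : HasDerivAt Z (2 / (Z t - x)) t) :
    HasDerivAt (fun s => conj (Z s)) (2 / (conj (Z t) - x)) t := by
  simpa [← starRingEnd_apply, map_div₀, map_sub, map_ofNat] using hZ.star

theorem Complex.sub_ofReal_ne_zero_of_im_pos {z : ℂ} (hz : 0 < z.im) (x : ℝ) : z - x ≠ 0 :=
  fun h => hz.ne' (by simpa using congrArg im h)

theorem Complex.re_mul_conj_sub (a b : ℂ) : (a * (conj b - b)).re = 2 * a.im * b.im := by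
  simp only [mul_re, sub_re, sub_im, conj_re, conj_im]
  ring

theorem statement12_general (I : Set ℝ) (ξ : ℝ → ℝ) (W Z : ℝ → ℂ)
    (hW : ∀ t ∈ I, 0 < (W t).im) (hZ : ∀ t ∈ I, 0 < (Z t).im)
    (hWZ : ∀ t ∈ I, W t ≠ Z t)
    (hW' : ∀ t ∈ I, HasDerivAt W (2 / (W t - (ξ t : ℂ))) t)
    (hZ' : ∀ t ∈ I, HasDerivAt Z (2 / (Z t - (ξ t : ℂ))) t) :
    ∀ t ∈ I, HasDerivAt (GreenT W Z)
      (-(2 * Real.pi) * (PoisT ξ W t * PoisT ξ Z t)) t := by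
  intro t ht
  have hWξ := sub_ofReal_ne_zero_of_im_pos (hW t ht) (ξ t)
  have hZξ := sub_ofReal_ne_zero_of_im_pos (hZ t ht) (ξ t)
  have hZξ' : conj (Z t) - ξ t ≠ 0 := by
    rw [← conj_ofReal, ← map_sub]
    exact (map_ne_zero _).2 hZξ
  have hWZ' : W t - conj (Z t) ≠ 0 := fun h => by
    have := congrArg im h
    simp only [sub_im, conj_im, zero_im] at this
    linarith [hW t ht, hZ t ht]
  have hu0 : (W t - Z t) / (W t - conj (Z t)) ≠ 0 := div_ne_zero (sub_ne_zero.2 (hWZ t ht)) hWZ'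
  have hnum := hasDerivAt_sub_of_loewner (hW' t ht) (hZ' t ht) hWξ hZξ
  have hden := hasDerivAt_sub_of_loewner (hW' t ht) (hZ' t ht).conj_loewner hWξ hZξ'
  have hconj : (conj (Z t) - ξ t)⁻¹ = conj (Z t - ξ t)⁻¹ := by
    rw [map_inv₀, map_sub, conj_ofReal]
  rw [hconj] at hden
  refine (((hnum.div_of_eq_mul hden hWZ').log_norm hu0).const_mul _).congr_deriv ?_
  rw [mul_div_cancel_right₀ _ hu0,
    show ∀ a b : ℂ, -2 * a * b - -2 * a * conj b = ((2 : ℝ) : ℂ) * (a * (conj b - b)) by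
      intros; push_cast; ring,
    re_ofReal_mul, re_mul_conj_sub]
  unfold PoisT
  field_simp

/-- **Hadamard's formula.** Let `I ⊆ ℝ` be an open interval,
`ξ : ℝ → ℝ`, and `W, Z : ℝ → ℂ` be such that for every `t ∈ I`: `Im(W t) > 0`,
`Im(Z t) > 0`, `W t ≠ Z t`, and `W`, `Z` satisfy the Loewner ODEs
`W' t = 2/(W t - ξ t)`, `Z' t = 2/(Z t - ξ t)`. Then for every `t ∈ I` the Green
function `G` has derivative `-2π·P_W(t)·P_Z(t)` at `t`. -/
theorem statement12 (I : Set ℝ) (hIopen : IsOpen I) (hIconn : I.OrdConnected)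
    (ξ : ℝ → ℝ) (W Z : ℝ → ℂ)
    (hW : ∀ t ∈ I, 0 < (W t).im) (hZ : ∀ t ∈ I, 0 < (Z t).im)
    (hWZ : ∀ t ∈ I, W t ≠ Z t)
    (hW' : ∀ t ∈ I, HasDerivAt W (2 / (W t - (ξ t : ℂ))) t)
    (hZ' : ∀ t ∈ I, HasDerivAt Z (2 / (Z t - (ξ t : ℂ))) t) :
    ∀ t ∈ I, HasDerivAt (GreenT W Z)
      (-(2 * Real.pi) * (PoisT ξ W t * PoisT ξ Z t)) t :=
  statement12_general I ξ W Z hW hZ hWZ hW' hZ'
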